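/- arXiv:1803.02011 — 2 statements merged into one kernel-verified Lean document; each statement's English description precedes it below -/
import Mathlib

section
/- Let G be a compact group acting linearly on a finite dimensional real vector space V, and suppose u, v ∈ V lie in distinct G-orbits. Then there exists a G-invariant polynomial p on V with p(u) ≠ p(v). -/
/-!
Stone–Weierstrass and Urysohn give a polynomial `q` that is `> 3/4` on the compact orbit `G • u`
and `< 1/4` on `G • v`. Its Haar average `w ↦ ∫ q (g⁻¹ • w) dg` is `G`-invariant and keeps these
bounds. The average is again a polynomial: all the translates `q ∘ g⁻¹` lie in the
finite-dimensional space of polynomials of degree at most `deg q`, and on a finite-dimensional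
space of functions the value at any point is a fixed linear combination of the values at finitely
many points, so an average of functions from such a space stays in it.
-/

open MeasureTheory

def polyFuns (V : Type*) [AddCommGroup V] [Module ℝ V] : Subalgebra ℝ (V → ℝ) :=
  Algebra.adjoin ℝ (Set.range fun l : Module.Dual ℝ V => (l : V → ℝ))

namespace Submodule

section DivisionRing

variable {K α : Type*} [DivisionRing K] (W : Submodule K (α → K)) [FiniteDimensional K W]

theorem exists_finset_eq_zero_of_eqOn_zero :
    ∃ s : Finset α, ∀ x ∈ W, Set.EqOn x 0 s → x = 0 := by
  classical
  let vanishing (s : Finset α) : Submodule K W :=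
    ⨅ a ∈ s, LinearMap.ker ((LinearMap.proj a).comp W.subtype)
  have mem_vanishing (s : Finset α) (x : W) : x ∈ vanishing s ↔ ∀ a ∈ s, (x : α → K) a = 0 := by
    simp [vanishing]
  -- a minimal common kernel cannot shrink when a point is added to `s`
  obtain ⟨_, ⟨s, rfl⟩, hmin⟩ := IsArtinian.set_has_minimal (Set.range vanishing) ⟨_, ⟨∅, rfl⟩⟩
  refine ⟨s, fun x hxW hx => ?_⟩
  suffices h : ∀ a, x a = 0 from funext h
  intro a
  have hle : vanishing (insert a s) ≤ vanishing s := fun y hy =>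
    (mem_vanishing _ _).2 fun b hb => (mem_vanishing _ _).1 hy b (Finset.mem_insert_of_mem hb)
  have heq : vanishing (insert a s) = vanishing s :=
    hle.eq_of_not_lt (hmin _ ⟨_, rfl⟩)
  have hx' : (⟨x, hxW⟩ : W) ∈ vanishing (insert a s) := heq ▸ (mem_vanishing _ _).2 hx
  exact (mem_vanishing _ _).1 hx' a (Finset.mem_insert_self a s)

theorem exists_finset_apply_eq_sum :
    ∃ (s : Finset α) (f : s → W), ∀ x ∈ W, ∀ b, x b = ∑ a : s, x a * (f a : α → K) b := by
  classical
  obtain ⟨s, hs⟩ := W.exists_finset_eq_zero_of_eqOn_zero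
  let restrict : W →ₗ[K] (s → K) := (LinearMap.funLeft K K ((↑) : s → α)).comp W.subtype
  obtain ⟨L, hL⟩ := restrict.exists_leftInverse_of_injective <| LinearMap.ker_eq_bot'.2
    fun x hx => Subtype.ext <| hs x x.2 fun a ha => congr_fun hx ⟨a, ha⟩
  refine ⟨s, fun a => L (Pi.basisFun K s a), fun x hx b => ?_⟩
  have hLx : L (restrict ⟨x, hx⟩) = ⟨x, hx⟩ := LinearMap.congr_fun hL _
  calc x b = (L (restrict ⟨x, hx⟩) : α → K) b := by rw [hLx]
    _ = ∑ a : s, x a * (L (Pi.basisFun K s a) : α → K) b := by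
        rw [← (Pi.basisFun K s).sum_repr (restrict ⟨x, hx⟩)]
        simp [restrict, Finset.sum_apply]

end DivisionRing

theorem integral_mem {α G : Type*} [MeasurableSpace G] {μ : Measure G}
    (W : Submodule ℝ (α → ℝ)) [FiniteDimensional ℝ W] {c : G → α → ℝ} (hc : ∀ g, c g ∈ W)
    (hint : ∀ a, Integrable (fun g => c g a) μ) : (fun a => ∫ g, c g a ∂μ) ∈ W := by
  obtain ⟨s, f, hf⟩ := W.exists_finset_apply_eq_sum
  have hexpand : (fun a => ∫ g, c g a ∂μ) = ∑ i : s, (∫ g, c g i ∂μ) • (f i : α → ℝ) := by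
    funext b
    simp only [hf _ (hc _) b, Finset.sum_apply, Pi.smul_apply, smul_eq_mul]
    rw [integral_finsetSum _ fun (i : s) _ => (hint i).mul_const _]
    simp only [integral_mul_const]
  rw [hexpand]
  exact sum_mem fun i _ => smul_mem _ _ (f i).2

end Submodule

section PolyFuns

variable {V : Type*} [AddCommGroup V] [Module ℝ V]

variable (V) in
def affineFuns : Submodule ℝ (V → ℝ) :=
  1 ⊔ LinearMap.range (LinearMap.ltoFun ℝ V ℝ ℝ)

variable (V) in
def polyFunsDegreeLE (d : ℕ) : Submodule ℝ (V → ℝ) :=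
  affineFuns V ^ d

theorem one_le_affineFuns : 1 ≤ affineFuns V := le_sup_left

theorem coe_mem_affineFuns (l : Module.Dual ℝ V) : ⇑l ∈ affineFuns V :=
  Submodule.mem_sup_right ⟨l, rfl⟩

instance [FiniteDimensional ℝ V] (d : ℕ) : FiniteDimensional ℝ (polyFunsDegreeLE V d) := by
  have hone : (1 : Submodule ℝ (V → ℝ)).FG := by
    rw [Submodule.one_eq_span]
    exact Submodule.fg_span_singleton 1
  have hlinear : (LinearMap.range (LinearMap.ltoFun ℝ V ℝ ℝ)).FG :=
    Module.Finite.iff_fg.1 inferInstance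
  exact Module.Finite.iff_fg.2 <| (hone.sup hlinear).pow d

theorem polyFunsDegreeLE_le_polyFuns (d : ℕ) :
    polyFunsDegreeLE V d ≤ Subalgebra.toSubmodule (polyFuns V) := by
  have affine_le : affineFuns V ≤ Subalgebra.toSubmodule (polyFuns V) := by
    refine sup_le (Submodule.one_le.2 (polyFuns V).one_mem) ?_
    rintro _ ⟨l, rfl⟩
    exact Algebra.subset_adjoin ⟨l, rfl⟩
  induction d with
  | zero => exact Submodule.one_le.2 (polyFuns V).one_mem
  | succ d ih =>
    rw [polyFunsDegreeLE, pow_succ]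
    exact Submodule.mul_le.2 fun x hx y hy => (polyFuns V).mul_mem (ih hx) (affine_le hy)

theorem exists_mem_polyFunsDegreeLE {p : V → ℝ} (hp : p ∈ polyFuns V) :
    ∃ d, p ∈ polyFunsDegreeLE V d := by
  have mono {a b : ℕ} (hab : a ≤ b) : polyFunsDegreeLE V a ≤ polyFunsDegreeLE V b :=
    pow_le_pow_right' one_le_affineFuns hab
  induction hp using Algebra.adjoin_induction with
  | mem x hx =>
    obtain ⟨l, rfl⟩ := hx
    exact ⟨1, by rw [polyFunsDegreeLE, pow_one]; exact coe_mem_affineFuns l⟩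
  | algebraMap r => exact ⟨0, Submodule.algebraMap_mem r⟩
  | add x y _ _ hx hy =>
    obtain ⟨a, ha⟩ := hx
    obtain ⟨b, hb⟩ := hy
    exact ⟨max a b, add_mem (mono (le_max_left a b) ha) (mono (le_max_right a b) hb)⟩
  | mul x y _ _ hx hy =>
    obtain ⟨a, ha⟩ := hx
    obtain ⟨b, hb⟩ := hy
    exact ⟨a + b, by rw [polyFunsDegreeLE, pow_add]; exact Submodule.mul_mem_mul ha hb⟩

theorem comp_linearMap_mem_polyFunsDegreeLE {d : ℕ} {p : V → ℝ}
    (hp : p ∈ polyFunsDegreeLE V d) (T : V →ₗ[ℝ] V) : p ∘ T ∈ polyFunsDegreeLE V d := by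
  let precomp : (V → ℝ) →ₐ[ℝ] (V → ℝ) := AlgHom.pi fun w => Pi.evalAlgHom ℝ (fun _ => ℝ) (T w)
  have hmap : (affineFuns V).map precomp.toLinearMap ≤ affineFuns V := by
    refine Submodule.map_le_iff_le_comap.2 (sup_le (Submodule.one_le.2 ?_) ?_)
    · change precomp 1 ∈ affineFuns V
      rw [map_one]
      exact Submodule.one_le.1 one_le_affineFuns
    · rintro _ ⟨l, rfl⟩
      exact coe_mem_affineFuns (l ∘ₗ T)
  have hpow := Submodule.map_pow (affineFuns V) precomp d
  exact (hpow.le.trans (pow_le_pow_left' hmap d)) ⟨p, hp, rfl⟩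

end PolyFuns

section Topology

variable {V : Type*} [AddCommGroup V] [Module ℝ V] [FiniteDimensional ℝ V]
  [TopologicalSpace V] [IsTopologicalAddGroup V] [ContinuousSMul ℝ V] [T2Space V]

theorem continuous_of_mem_polyFuns {p : V → ℝ} (hp : p ∈ polyFuns V) : Continuous p := by
  induction hp using Algebra.adjoin_induction with
  | mem x hx => obtain ⟨l, rfl⟩ := hx; exact l.continuous_of_finiteDimensional
  | algebraMap r => exact continuous_const
  | add x y _ _ hx hy => exact hx.add hy
  | mul x y _ _ hx hy => exact hx.mul hy

theorem exists_mem_polyFuns_forall_abs_sub_lt {K : Set V} (hK : IsCompact K) (f : C(K, ℝ))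
    {ε : ℝ} (hε : 0 < ε) : ∃ q ∈ polyFuns V, ∀ x : K, |q x - f x| < ε := by
  have : CompactSpace K := isCompact_iff_compactSpace.1 hK
  let restrict : (V → ℝ) →ₐ[ℝ] (K → ℝ) := AlgHom.pi fun x => Pi.evalAlgHom ℝ (fun _ => ℝ) x.1
  let S : Subalgebra ℝ C(K, ℝ) := ((polyFuns V).map restrict).comap (ContinuousMap.coeFnAlgHom ℝ)
  have hsep : S.SeparatesPoints := by
    rintro x y hxy
    obtain ⟨l, hl⟩ :=
      Module.Projective.exists_dual_ne_zero ℝ (sub_ne_zero.2 (Subtype.coe_ne_coe.2 hxy))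
    refine ⟨_, ⟨⟨(⇑l) ∘ Subtype.val, l.continuous_of_finiteDimensional.comp continuous_subtype_val⟩,
      ⟨l, Algebra.subset_adjoin ⟨l, rfl⟩, rfl⟩, rfl⟩, ?_⟩
    simpa [sub_ne_zero] using hl
  obtain ⟨g, hg⟩ := ContinuousMap.exists_mem_subalgebra_near_continuousMap_of_separatesPoints
    S hsep f ε hε
  obtain ⟨q, hq, hqg⟩ := g.2
  refine ⟨q, hq, fun x => ?_⟩
  have hx : q x = (g : C(K, ℝ)) x := congr_fun hqg x
  rw [hx, ← Real.norm_eq_abs]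
  exact (ContinuousMap.norm_coe_le_norm ((g : C(K, ℝ)) - f) x).trans_lt hg

theorem exists_mem_polyFuns_near_indicator {A B : Set V} (hA : IsCompact A) (hB : IsCompact B)
    (hAB : Disjoint A B) {ε : ℝ} (hε : 0 < ε) :
    ∃ q ∈ polyFuns V, (∀ x ∈ A, 1 - ε < q x) ∧ ∀ x ∈ B, q x < ε := by
  have : CompactSpace ↥(A ∪ B) := isCompact_iff_compactSpace.1 (hA.union hB)
  obtain ⟨F, hF0, hF1, -⟩ := exists_continuous_zero_one_of_isClosed
    (hB.isClosed.preimage continuous_subtype_val) (hA.isClosed.preimage continuous_subtype_val)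
    (hAB.symm.preimage ((↑) : ↥(A ∪ B) → V))
  obtain ⟨q, hq, hqF⟩ := exists_mem_polyFuns_forall_abs_sub_lt (hA.union hB) F hε
  refine ⟨q, hq, fun x hx => ?_, fun x hx => ?_⟩
  · have h : |q x - 1| < ε := by
      simpa [hF1 (show (⟨x, Or.inl hx⟩ : ↥(A ∪ B)) ∈ (↑) ⁻¹' A from hx)] using hqF ⟨x, Or.inl hx⟩
    linarith [(abs_lt.1 h).1]
  · have h : |q x| < ε := by
      simpa [hF0 (show (⟨x, Or.inr hx⟩ : ↥(A ∪ B)) ∈ (↑) ⁻¹' B from hx)] using hqF ⟨x, Or.inr hx⟩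
    linarith [(abs_lt.1 h).2]

end Topology

theorem integral_comp_linearMap_mem_polyFuns {V : Type*} [AddCommGroup V] [Module ℝ V]
    [FiniteDimensional ℝ V] {ι : Type*} [MeasurableSpace ι] {μ : Measure ι} {p : V → ℝ}
    (hp : p ∈ polyFuns V) (T : ι → V →ₗ[ℝ] V) (hint : ∀ w, Integrable (fun i => p (T i w)) μ) :
    (fun w => ∫ i, p (T i w) ∂μ) ∈ polyFuns V := by
  obtain ⟨d, hd⟩ := exists_mem_polyFunsDegreeLE hp
  exact polyFunsDegreeLE_le_polyFuns d <|
    (polyFunsDegreeLE V d).integral_mem (fun i => comp_linearMap_mem_polyFunsDegreeLE hd (T i)) hint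

section OrbitAverage

variable {G V : Type*} [Group G] [MeasurableSpace G] [MulAction G V]

noncomputable def orbitAverage (μ : Measure G) (q : V → ℝ) (w : V) : ℝ :=
  ∫ g, q (g⁻¹ • w) ∂μ

theorem orbitAverage_smul [MeasurableMul G] (μ : Measure G) [μ.IsMulLeftInvariant] (q : V → ℝ)
    (g : G) (w : V) : orbitAverage μ q (g • w) = orbitAverage μ q w := by
  calc ∫ h, q (h⁻¹ • g • w) ∂μ = ∫ h, q ((g⁻¹ * h)⁻¹ • w) ∂μ := by
        simp only [mul_inv_rev, inv_inv, mul_smul]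
    _ = ∫ h, q (h⁻¹ • w) ∂μ := integral_mul_left_eq_self (fun h => q (h⁻¹ • w)) g⁻¹

variable [TopologicalSpace G] [ContinuousInv G] [CompactSpace G] [OpensMeasurableSpace G]
  [TopologicalSpace V] [ContinuousSMul G V]

theorem integrable_comp_inv_smul (μ : Measure G) [IsFiniteMeasure μ] {q : V → ℝ}
    (hq : Continuous q) (w : V) : Integrable (fun g => q (g⁻¹ • w)) μ :=
  (hq.comp (continuous_inv.smul continuous_const)).integrable_of_hasCompactSupport
    (HasCompactSupport.of_compactSpace _)

theorem le_orbitAverage (μ : Measure G) [IsProbabilityMeasure μ] {q : V → ℝ} (hq : Continuous q)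
    {w : V} {c : ℝ} (hc : ∀ x ∈ MulAction.orbit G w, c ≤ q x) : c ≤ orbitAverage μ q w := by
  calc c = ∫ _ : G, c ∂μ := by simp
    _ ≤ orbitAverage μ q w := integral_mono (integrable_const c) (integrable_comp_inv_smul μ hq w)
        fun g => hc _ ⟨g⁻¹, rfl⟩

theorem orbitAverage_le (μ : Measure G) [IsProbabilityMeasure μ] {q : V → ℝ} (hq : Continuous q)
    {w : V} {c : ℝ} (hc : ∀ x ∈ MulAction.orbit G w, q x ≤ c) : orbitAverage μ q w ≤ c := by
  calc orbitAverage μ q w ≤ ∫ _ : G, c ∂μ :=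
        integral_mono (integrable_comp_inv_smul μ hq w) (integrable_const c)
          fun g => hc _ ⟨g⁻¹, rfl⟩
    _ = c := by simp

theorem orbitAverage_mem_polyFuns [AddCommGroup V] [Module ℝ V] [FiniteDimensional ℝ V]
    [IsTopologicalAddGroup V] [ContinuousSMul ℝ V] [T2Space V]
    (hlin : ∀ g : G, IsLinearMap ℝ (fun v : V => g • v)) (μ : Measure G) [IsFiniteMeasure μ]
    {q : V → ℝ} (hq : q ∈ polyFuns V) : orbitAverage μ q ∈ polyFuns V :=
  integral_comp_linearMap_mem_polyFuns hq (fun g => IsLinearMap.mk' _ (hlin g⁻¹))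
    (integrable_comp_inv_smul μ (continuous_of_mem_polyFuns hq))

end OrbitAverage

/-- Polynomial invariants of a compact group separate orbits: if `u, v` lie in distinct orbits,
some `G`-invariant polynomial takes different values at `u` and `v`. -/
theorem invariant_poly_separates_orbits
    (G : Type*) [Group G] [TopologicalSpace G] [IsTopologicalGroup G] [CompactSpace G]
    (V : Type*) [AddCommGroup V] [Module ℝ V] [FiniteDimensional ℝ V]
    [TopologicalSpace V] [IsTopologicalAddGroup V] [ContinuousSMul ℝ V] [T2Space V]
    [MulAction G V] [ContinuousSMul G V]
    (hlin : ∀ g : G, IsLinearMap ℝ (fun v : V => g • v))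
    (u v : V) (h : u ∉ MulAction.orbit G v) :
    ∃ p : V → ℝ, p ∈ polyFuns V ∧ (∀ (g : G) (w : V), p (g • w) = p w) ∧ p u ≠ p v := by
  let : MeasurableSpace G := borel G
  have : BorelSpace G := ⟨rfl⟩
  let μ := Measure.haarMeasure (⊤ : TopologicalSpace.PositiveCompacts G)
  have : IsProbabilityMeasure μ := ⟨by
    rw [← TopologicalSpace.PositiveCompacts.coe_top]
    exact Measure.haarMeasure_self⟩
  have isCompact_orbit (x : V) : IsCompact (MulAction.orbit G x) :=
    isCompact_range (continuous_id.smul continuous_const)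
  have hdisj : Disjoint (MulAction.orbit G u) (MulAction.orbit G v) :=
    (MulAction.orbit.eq_or_disjoint u v).resolve_left fun he => h (MulAction.orbit_eq_iff.1 he)
  obtain ⟨q, hq, hqu, hqv⟩ := exists_mem_polyFuns_near_indicator (isCompact_orbit u)
    (isCompact_orbit v) hdisj (ε := 1 / 4) (by norm_num)
  have hqc := continuous_of_mem_polyFuns hq
  refine ⟨orbitAverage μ q, orbitAverage_mem_polyFuns hlin μ hq, orbitAverage_smul μ q, ?_⟩
  have hu := le_orbitAverage μ hqc fun x hx => (hqu x hx).le
  have hv := orbitAverage_le μ hqc fun x hx => (hqv x hx).le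
  intro heq
  linarith
end

section
/- Let G be a compact group acting linearly on a finite dimensional real vector space V, and let {p_1,...,p_r} be an integrity basis of the algebra of G-invariant polynomials. Then {p_1,...,p_r} is a function basis: for every G-invariant function f : V → ℝ there exists a function h : ℝ^r → ℝ such that f(v) = h(p_1(v),...,p_r(v)) for all v ∈ V. -/
/-!
Invariant polynomials separate the orbits of a compact group `G`. If `v ∉ G • u`, Urysohn's lemma
and Stone–Weierstrass give a polynomial `q` within `1/3` of `0` on `G • u` and of `1` on `G • v`;
its Haar average `w ↦ ∫ q (g⁻¹ • w) dg` is invariant, still separates `u` from `v`, and is again a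
polynomial: in coordinates `q (g⁻¹ • w)` is a polynomial in `w` of bounded degree whose coefficients
depend continuously on `g`, so averaging only integrates finitely many coefficients. As the `p i`
generate the invariant polynomials, they separate orbits too, so every invariant function factors
through `v ↦ (p i v)ᵢ`.
-/

open MvPolynomial MeasureTheory MulAction

section PolynomialFunctions

variable {V : Type*} [AddCommGroup V] [Module ℝ V]

theorem polyFuns_eq_adjoin_coord {ι : Type*} [Fintype ι] (b : Module.Basis ι ℝ V) :
    polyFuns V = Algebra.adjoin ℝ (Set.range fun i => (b.coord i : V → ℝ)) := by
  refine le_antisymm (Algebra.adjoin_le ?_) (Algebra.adjoin_mono ?_)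
  · rintro _ ⟨l, rfl⟩
    rw [← b.sum_dual_apply_smul_coord l]
    simp only [SetLike.mem_coe, LinearMap.coe_sum, LinearMap.coe_smul]
    exact Subalgebra.sum_mem _ fun i _ =>
      Subalgebra.smul_mem _ (Algebra.subset_adjoin (Set.mem_range_self i)) _
  · rintro _ ⟨i, rfl⟩
    exact ⟨b.coord i, rfl⟩

theorem mem_polyFuns_iff_exists_eval {ι : Type*} [Fintype ι] (b : Module.Basis ι ℝ V)
    {f : V → ℝ} : f ∈ polyFuns V ↔ ∃ P : MvPolynomial ι ℝ, ∀ w, f w = eval (b.repr w) P := by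
  have hcomp (P : MvPolynomial ι ℝ) (w : V) :
      aeval (fun i => (b.coord i : V → ℝ)) P w = eval (b.repr w) P :=
    DFunLike.congr_fun (comp_aeval _ (Pi.evalAlgHom ℝ (fun _ => ℝ) w)) P
  rw [polyFuns_eq_adjoin_coord b, Algebra.adjoin_range_eq_range_aeval, AlgHom.mem_range]
  simp only [funext_iff, hcomp, eq_comm]

variable [TopologicalSpace V] [IsTopologicalAddGroup V] [ContinuousSMul ℝ V] [T2Space V]
  [FiniteDimensional ℝ V]

theorem continuous_of_mem_polyFuns_s11 {f : V → ℝ} (hf : f ∈ polyFuns V) : Continuous f := by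
  induction hf using Algebra.adjoin_induction with
  | mem g hg => obtain ⟨l, rfl⟩ := hg; exact l.continuous_of_finiteDimensional
  | algebraMap r => exact continuous_const
  | add _ _ _ _ h1 h2 => exact h1.add h2
  | mul _ _ _ _ h1 h2 => exact h1.mul h2

theorem exists_mem_polyFuns_abs_sub_lt {K : Set V} (hK : IsCompact K) (φ : C(V, ℝ)) {ε : ℝ}
    (hε : 0 < ε) : ∃ q ∈ polyFuns V, ∀ x ∈ K, |q x - φ x| < ε := by
  let A : Subalgebra ℝ C(V, ℝ) := (polyFuns V).comap (ContinuousMap.coeFnAlgHom ℝ)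
  have hA : A.SeparatesPoints := by
    intro x y hxy
    obtain ⟨l, hl⟩ := Module.Projective.exists_dual_ne_zero ℝ (sub_ne_zero.mpr hxy)
    refine ⟨l, ⟨⟨l, l.continuous_of_finiteDimensional⟩, Algebra.subset_adjoin ⟨l, rfl⟩, rfl⟩, ?_⟩
    simpa [sub_eq_zero] using hl
  obtain ⟨q, hq, hqφ⟩ :=
    ContinuousMap.exists_mem_subalgebra_near_continuous_of_isCompact_of_separatesPoints hA φ hK hε
  exact ⟨q, hq, hqφ⟩

end PolynomialFunctions

namespace MvPolynomial

variable {σ τ R : Type*} [CommSemiring R]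

theorem totalDegree_bind₁_le_of_totalDegree_le_one {f : σ → MvPolynomial τ R}
    (hf : ∀ i, (f i).totalDegree ≤ 1) (P : MvPolynomial σ R) :
    (bind₁ f P).totalDegree ≤ P.totalDegree := by
  rw [← aeval_eq_bind₁, aeval_def, eval₂_eq]
  refine totalDegree_finsetSum_le fun m hm => ?_
  refine (totalDegree_mul _ _).trans ?_
  rw [algebraMap_eq, totalDegree_C, zero_add]
  calc (∏ i ∈ m.support, f i ^ m i).totalDegree
      ≤ ∑ i ∈ m.support, (f i ^ m i).totalDegree := totalDegree_finsetProd _ _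
    _ ≤ ∑ i ∈ m.support, m i := Finset.sum_le_sum fun i _ =>
        (totalDegree_pow _ _).trans (by simpa using Nat.mul_le_mul_left (m i) (hf i))
    _ ≤ P.totalDegree := le_totalDegree hm

theorem continuous_coeff_bind₁ {G : Type*} [TopologicalSpace G] [TopologicalSpace R]
    [IsTopologicalSemiring R] {f : G → σ → MvPolynomial τ R}
    (hf : ∀ i m, Continuous fun g => coeff m (f g i)) (P : MvPolynomial σ R) (m : τ →₀ ℕ) :
    Continuous fun g => coeff m (bind₁ (f g) P) := by
  induction P using MvPolynomial.induction_on generalizing m with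
  | C r => simpa using continuous_const
  | add p q hp hq =>
    simp only [map_add, coeff_add]
    exact (hp m).add (hq m)
  | mul_X p i hp =>
    classical
    simp only [map_mul, bind₁_X_right, coeff_mul]
    exact continuous_finsetSum _ fun x _ => (hp x.1).mul (hf i x.2)

theorem integral_eval_eq_eval_sum {G : Type*} [MeasurableSpace G] (μ : Measure G)
    {P : G → MvPolynomial σ ℝ} {s : Finset (σ →₀ ℕ)} (hs : ∀ g, (P g).support ⊆ s)
    (hP : ∀ m, Integrable (fun g => coeff m (P g)) μ) (x : σ → ℝ) :
    ∫ g, eval x (P g) ∂μ = eval x (∑ m ∈ s, monomial m (∫ g, coeff m (P g) ∂μ)) := by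
  have hsum (g : G) : eval x (P g) = ∑ m ∈ s, coeff m (P g) * eval x (monomial m 1) := by
    conv_lhs => rw [(P g).as_sum, Finset.sum_subset (hs g) fun m _ hm => by
      rw [notMem_support_iff.mp hm, monomial_zero]]
    simp only [map_sum, eval_monomial, one_mul]
  simp only [hsum, map_sum, eval_monomial]
  rw [integral_finsetSum _ fun m _ => (hP m).mul_const _]
  exact Finset.sum_congr rfl fun m _ => by rw [integral_mul_const, one_mul]

end MvPolynomial

theorem LinearMap.eval_bind₁_toMvPolynomial {R M₁ M₂ ι₁ ι₂ : Type*} [CommRing R]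
    [AddCommGroup M₁] [AddCommGroup M₂] [Module R M₁] [Module R M₂] [Fintype ι₁] [DecidableEq ι₁]
    [Finite ι₂] (b₁ : Module.Basis ι₁ R M₁) (b₂ : Module.Basis ι₂ R M₂) (f : M₁ →ₗ[R] M₂)
    (P : MvPolynomial ι₂ R) (x : M₁) :
    eval (b₁.repr x) (bind₁ (f.toMvPolynomial b₁ b₂) P) = eval (b₂.repr (f x)) P := by
  change eval₂Hom (RingHom.id R) _ (bind₁ _ P) = _
  rw [eval₂Hom_bind₁]
  refine congrArg (eval₂Hom (RingHom.id R) · P) (funext fun i => ?_)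
  exact (f.toMvPolynomial_eval_eq_apply b₁ b₂ i (b₁.repr x)).trans
    (by rw [LinearEquiv.symm_apply_apply])

section Averaging

variable {V : Type*} [AddCommGroup V] [Module ℝ V]
variable [TopologicalSpace V] [IsTopologicalAddGroup V] [ContinuousSMul ℝ V] [T2Space V]
  [FiniteDimensional ℝ V]

theorem integral_comp_linearMap_mem_polyFuns_s11 {G : Type*} [TopologicalSpace G] [CompactSpace G]
    [MeasurableSpace G] [OpensMeasurableSpace G] (μ : Measure G) [IsFiniteMeasure μ]
    {T : G → V →ₗ[ℝ] V} (hT : ∀ v, Continuous fun g => T g v) {q : V → ℝ}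
    (hq : q ∈ polyFuns V) : (fun w => ∫ g, q (T g w) ∂μ) ∈ polyFuns V := by
  let b := Module.finBasis ℝ V
  obtain ⟨P, hP⟩ := (mem_polyFuns_iff_exists_eval b).1 hq
  set F : G → MvPolynomial (Fin (Module.finrank ℝ V)) ℝ :=
    fun g => bind₁ ((T g).toMvPolynomial b b) P
  have hcoeff (m) : Continuous fun g => coeff m (F g) := by
    refine continuous_coeff_bind₁ (fun i m => ?_) P m
    simp only [LinearMap.toMvPolynomial, Matrix.toMvPolynomial, coeff_sum, coeff_monomial,
      LinearMap.toMatrix_apply]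
    refine continuous_finsetSum _ fun j _ => ?_
    split_ifs
    · exact ((b.coord i).continuous_of_finiteDimensional.comp (hT (b j)))
    · exact continuous_const
  set s := (Finsupp.finite_of_degree_le (σ := Fin (Module.finrank ℝ V)) P.totalDegree).toFinset
  have hsupp (g) : (F g).support ⊆ s := by
    intro m hm
    rw [Set.Finite.mem_toFinset]
    exact (le_totalDegree hm).trans (totalDegree_bind₁_le_of_totalDegree_le_one
      (fun i => (T g).toMvPolynomial_totalDegree_le b b i) P)
  refine (mem_polyFuns_iff_exists_eval b).2
    ⟨∑ m ∈ s, monomial m (∫ g, coeff m (F g) ∂μ), fun w => ?_⟩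
  simp only [hP, ← LinearMap.eval_bind₁_toMvPolynomial b b]
  exact integral_eval_eq_eval_sum μ hsupp
    (fun m => (hcoeff m).integrable_of_hasCompactSupport (.of_compactSpace _)) _

end Averaging

section Reynolds

variable {G V : Type*} [Group G] [MulAction G V] [MeasurableSpace G]

noncomputable def reynolds (μ : Measure G) (f : V → ℝ) (w : V) : ℝ :=
  ∫ g, f (g⁻¹ • w) ∂μ

theorem reynolds_smul [MeasurableMul G] (μ : Measure G) [μ.IsMulLeftInvariant] (f : V → ℝ)
    (h : G) (w : V) : reynolds μ f (h • w) = reynolds μ f w := by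
  rw [reynolds, ← integral_mul_left_eq_self _ h]
  simp only [mul_inv_rev, mul_smul, inv_smul_smul]
  rfl

variable [TopologicalSpace G] [ContinuousInv G] [CompactSpace G] [OpensMeasurableSpace G]
  [TopologicalSpace V] [ContinuousSMul G V]

theorem abs_reynolds_sub_le (μ : Measure G) [IsProbabilityMeasure μ] {f : V → ℝ}
    (hf : Continuous f) {w : V} {c ε : ℝ} (hfc : ∀ x ∈ orbit G w, |f x - c| ≤ ε) :
    |reynolds μ f w - c| ≤ ε := by
  have hint : Integrable (fun g : G => f (g⁻¹ • w)) μ :=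
    (hf.comp (continuous_inv.smul continuous_const)).integrable_of_hasCompactSupport
      (.of_compactSpace _)
  have hsub : reynolds μ f w - c = ∫ g, (f (g⁻¹ • w) - c) ∂μ := by
    rw [integral_sub hint (integrable_const c), integral_const, probReal_univ, one_smul, reynolds]
  rw [hsub, ← Real.norm_eq_abs]
  simpa using norm_integral_le_of_norm_le_const (μ := μ) (C := ε)
    (.of_forall fun g => (Real.norm_eq_abs _).trans_le (hfc _ (mem_orbit w g⁻¹)))

variable [AddCommGroup V] [Module ℝ V] [IsTopologicalAddGroup V] [ContinuousSMul ℝ V]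
  [T2Space V] [FiniteDimensional ℝ V]

theorem reynolds_mem_polyFuns (hlin : ∀ g : G, IsLinearMap ℝ (fun v : V => g • v))
    (μ : Measure G) [IsFiniteMeasure μ] {q : V → ℝ} (hq : q ∈ polyFuns V) :
    reynolds μ q ∈ polyFuns V :=
  integral_comp_linearMap_mem_polyFuns_s11 μ (T := fun g => IsLinearMap.mk' _ (hlin g⁻¹))
    (fun _ => continuous_inv.smul continuous_const) hq

end Reynolds

theorem exists_invariant_mem_polyFuns_ne
    (G : Type*) [Group G] [TopologicalSpace G] [IsTopologicalGroup G] [CompactSpace G]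
    {V : Type*} [AddCommGroup V] [Module ℝ V] [FiniteDimensional ℝ V]
    [TopologicalSpace V] [IsTopologicalAddGroup V] [ContinuousSMul ℝ V] [T2Space V]
    [MulAction G V] [ContinuousSMul G V]
    (hlin : ∀ g : G, IsLinearMap ℝ (fun v : V => g • v)) {u v : V} (huv : v ∉ orbit G u) :
    ∃ F ∈ polyFuns V, (∀ (g : G) (w : V), F (g • w) = F w) ∧ F u ≠ F v := by
  have : LocallyCompactSpace V := .of_finiteDimensional_of_complete ℝ V
  have horbit (w : V) : IsCompact (orbit G w) :=
    isCompact_range (continuous_id.smul continuous_const)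
  have hdisj : Disjoint (orbit G u) (orbit G v) :=
    (orbit.eq_or_disjoint u v).resolve_left fun h => huv (h ▸ mem_orbit_self v)
  obtain ⟨φ, hφu, hφv, -⟩ :=
    exists_continuous_zero_one_of_isCompact (horbit u) (horbit v).isClosed hdisj
  obtain ⟨q, hq, hqφ⟩ :=
    exists_mem_polyFuns_abs_sub_lt ((horbit u).union (horbit v)) φ (by norm_num : (0 : ℝ) < 1 / 3)
  let : MeasurableSpace G := borel G
  have : BorelSpace G := ⟨rfl⟩
  let μ : Measure G := Measure.haarMeasure ⊤
  have : IsProbabilityMeasure μ := ⟨Measure.haarMeasure_self⟩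
  have hqc := continuous_of_mem_polyFuns_s11 hq
  refine ⟨reynolds μ q, reynolds_mem_polyFuns hlin μ hq, reynolds_smul μ q, fun h => ?_⟩
  have hu := abs_reynolds_sub_le μ hqc (c := 0) (ε := 1 / 3) fun x hx => by
    simpa [hφu hx] using (hqφ x (.inl hx)).le
  have hv := abs_reynolds_sub_le μ hqc (c := 1) (ε := 1 / 3) fun x hx => by
    simpa [hφv hx] using (hqφ x (.inr hx)).le
  rw [h] at hu
  rw [abs_le] at hu hv
  linarith [hu.1, hv.2]

theorem mem_orbit_of_forall_apply_eq
    (G : Type*) [Group G] [TopologicalSpace G] [IsTopologicalGroup G] [CompactSpace G]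
    {V : Type*} [AddCommGroup V] [Module ℝ V] [FiniteDimensional ℝ V]
    [TopologicalSpace V] [IsTopologicalAddGroup V] [ContinuousSMul ℝ V] [T2Space V]
    [MulAction G V] [ContinuousSMul G V]
    (hlin : ∀ g : G, IsLinearMap ℝ (fun v : V => g • v)) {ι : Type*} {p : ι → V → ℝ}
    (hgen : ∀ F ∈ polyFuns V, (∀ (g : G) (w : V), F (g • w) = F w) →
      F ∈ Algebra.adjoin ℝ (Set.range p))
    {u v : V} (huv : ∀ i, p i u = p i v) : v ∈ orbit G u := by
  by_contra hv
  obtain ⟨F, hF, hFinv, hFuv⟩ := exists_invariant_mem_polyFuns_ne G hlin hv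
  refine hFuv ((AlgHom.eqOn_adjoin_iff (φ := Pi.evalAlgHom ℝ (fun _ => ℝ) u)
    (ψ := Pi.evalAlgHom ℝ (fun _ => ℝ) v)).mpr ?_ (hgen F hF hFinv))
  rintro _ ⟨i, rfl⟩
  exact huv i

theorem integrity_basis_is_function_basis_general
    (G : Type*) [Group G] [TopologicalSpace G] [IsTopologicalGroup G] [CompactSpace G]
    (V : Type*) [AddCommGroup V] [Module ℝ V] [FiniteDimensional ℝ V]
    [TopologicalSpace V] [IsTopologicalAddGroup V] [ContinuousSMul ℝ V] [T2Space V]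
    [MulAction G V] [ContinuousSMul G V]
    (hlin : ∀ g : G, IsLinearMap ℝ (fun v : V => g • v))
    (r : ℕ) (p : Fin r → (V → ℝ))
    (hgen : (Algebra.adjoin ℝ (Set.range p) : Set (V → ℝ)) =
      {f : V → ℝ | f ∈ polyFuns V ∧ ∀ (g : G) (w : V), f (g • w) = f w}) :
    ∀ f : V → ℝ, (∀ (g : G) (v : V), f (g • v) = f v) →
      ∃ h : (Fin r → ℝ) → ℝ, ∀ v : V, f v = h (fun i => p i v) := by
  intro f hf
  have hfactor : f.FactorsThrough fun v i => p i v := fun u v huv => by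
    obtain ⟨g, rfl⟩ := mem_orbit_of_forall_apply_eq G hlin
      (fun F hF hFinv => hgen.superset ⟨hF, hFinv⟩) (congrFun huv)
    exact (hf g u).symm
  exact ⟨Function.extend (fun v i => p i v) f 0, fun v => (hfactor.extend_apply 0 v).symm⟩

/-- If `p_1, …, p_r` is an integrity basis (a generating set of the algebra of all `G`-invariant
polynomial functions on `V`, `G` compact), then `p_i(u) = p_i(v)` for all `i` iff `u` and `v`
lie in the same `G`-orbit. -/
theorem integrity_basis_is_function_basis
    (G : Type*) [Group G] [TopologicalSpace G] [IsTopologicalGroup G] [CompactSpace G]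
    (V : Type*) [AddCommGroup V] [Module ℝ V] [FiniteDimensional ℝ V]
    [TopologicalSpace V] [IsTopologicalAddGroup V] [ContinuousSMul ℝ V] [T2Space V]
    [MulAction G V] [ContinuousSMul G V]
    (hlin : ∀ g : G, IsLinearMap ℝ (fun v : V => g • v))
    (r : ℕ) (p : Fin r → (V → ℝ))
    (hp : ∀ i, p i ∈ polyFuns V ∧ ∀ (g : G) (w : V), (p i) (g • w) = (p i) w)
    (hgen : (Algebra.adjoin ℝ (Set.range p) : Set (V → ℝ)) =
      {f : V → ℝ | f ∈ polyFuns V ∧ ∀ (g : G) (w : V), f (g • w) = f w}) :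
    ∀ f : V → ℝ, (∀ (g : G) (v : V), f (g • v) = f v) →
      ∃ h : (Fin r → ℝ) → ℝ, ∀ v : V, f v = h (fun i => p i v) :=
  integrity_basis_is_function_basis_general G V hlin r p hgen
end
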